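/- arXiv:1503.06620 — 2 statements merged into one kernel-verified Lean document; each statement's English description precedes it below -/
import Mathlib

section
/- (Existence of multipoint Padé approximants) Let U ⊆ ℂ be open, let f be analytic on U, let n ≥ 1, and let ζ_1, …, ζ_{2n} ∈ U be (not necessarily distinct) interpolation nodes with W(z) := ∏_{k=1}^{2n} (z − ζ_k). Then there exist polynomials P of degree ≤ n − 1 and Q of degree ≤ n with Q not identically 0, together with a function h analytic on U, such that Q(z) f(z) − P(z) = W(z) h(z) for all z ∈ U. -/
open Polynomial

/-!
Dividing out one node at a time with `dslope` writes any `g` holomorphic on `U` as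
`g = R + W h` with `deg R < 2n` and `h` holomorphic (Hermite interpolation). Hence, modulo
polynomials of degree `< n` plus `W` times holomorphic functions, every `g` is congruent to
`z ^ n S(z)` with `deg S < n`: the classes of the functions `Q f`, `deg Q ≤ n`, lie in a space
of dimension `≤ n`, so some nonzero `Q` has `Q f ≡ 0`, which is `Q f = P + W h`.
-/

theorem Polynomial.divByMonic_X_pow_mem_degreeLT {R : Type*} [CommRing R] {n m : ℕ} {p : R[X]}
    (hp : p ∈ degreeLT R (n + m)) : p /ₘ X ^ n ∈ degreeLT R m := by
  nontriviality R
  rw [mem_degreeLT] at hp ⊢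
  rcases eq_or_ne (p /ₘ X ^ n) 0 with h | h
  · simp [h]
  have hp0 : p ≠ 0 := by rintro rfl; simp at h
  have hn : n ≤ p.natDegree := by
    by_contra! hlt
    refine h ((divByMonic_eq_zero_iff (monic_X_pow n)).2 ?_)
    rw [degree_X_pow]
    exact degree_le_natDegree.trans_lt (by exact_mod_cast hlt)
  rw [degree_eq_natDegree h, natDegree_divByMonic _ (monic_X_pow n), natDegree_X_pow]
  have := (natDegree_lt_iff_degree_lt hp0).2 hp
  exact_mod_cast (by omega : p.natDegree - n < m)

theorem Polynomial.C_add_X_sub_C_mul_mem_degreeLT {R : Type*} [CommRing R] {m : ℕ} (a c : R)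
    {p : R[X]} (hp : p ∈ degreeLT R m) : C c + (X - C a) * p ∈ degreeLT R (m + 1) := by
  refine add_mem ?_ ?_
  · rw [degreeLT_succ_eq_degreeLE, mem_degreeLE]
    exact degree_C_le.trans (by exact_mod_cast Nat.zero_le m)
  · rw [mem_degreeLT] at hp ⊢
    calc ((X - C a) * p).degree ≤ (X - C a).degree + p.degree := degree_mul_le _ _
      _ ≤ 1 + p.degree := by gcongr; exact degree_X_sub_C_le a
      _ < 1 + m := WithBot.add_lt_add_left WithBot.one_ne_bot hp
      _ = ↑(m + 1) := by push_cast; ring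

theorem LinearMap.ker_ne_bot_of_range_le_range {K V V' M : Type*} [Field K] [AddCommGroup V]
    [Module K V] [AddCommGroup V'] [Module K V'] [AddCommGroup M] [Module K M]
    [FiniteDimensional K V] [FiniteDimensional K V'] {T : V →ₗ[K] M} (S : V' →ₗ[K] M)
    (hTS : range T ≤ range S) (h : Module.finrank K V' < Module.finrank K V) : ker T ≠ ⊥ := by
  rw [← ker_codRestrict (range S) T fun v => hTS (mem_range_self T v)]
  exact ker_ne_bot_of_finrank_lt ((finrank_range_le S).trans_lt h)

@[simps]
def Polynomial.evalMulLinear {R : Type*} [CommSemiring R] (f : R → R) :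
    R[X] →ₗ[R] R → R where
  toFun Q z := Q.eval z * f z
  map_add' _ _ := by funext z; simp [add_mul]
  map_smul' _ _ := by funext z; simp [mul_assoc]

theorem Complex.exists_mem_degreeLT_eq_eval_add_prod_mul {ι : Type*} {U : Set ℂ} (hU : IsOpen U)
    (s : Finset ι) (ζ : ι → ℂ) (hζ : ∀ k ∈ s, ζ k ∈ U) {g : ℂ → ℂ}
    (hg : DifferentiableOn ℂ g U) :
    ∃ R ∈ degreeLT ℂ s.card, ∃ h : ℂ → ℂ, DifferentiableOn ℂ h U ∧
      ∀ z ∈ U, g z = R.eval z + (∏ k ∈ s, (z - ζ k)) * h z := by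
  classical
  induction s using Finset.induction_on generalizing g with
  | empty => exact ⟨0, zero_mem _, g, hg, by simp⟩
  | insert a s ha ih =>
    have haU := hζ a (Finset.mem_insert_self a s)
    obtain ⟨R, hR, h, hh, hgR⟩ := ih (fun k hk => hζ k (Finset.mem_insert_of_mem hk))
      ((Complex.differentiableOn_dslope (hU.mem_nhds haU)).2 hg)
    refine ⟨C (g (ζ a)) + (X - C (ζ a)) * R, ?_, h, hh, fun z hz => ?_⟩
    · rw [Finset.card_insert_of_notMem ha]
      exact C_add_X_sub_C_mul_mem_degreeLT _ _ hR
    · have hdiv := sub_smul_dslope g (ζ a) z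
      rw [smul_eq_mul, hgR z hz] at hdiv
      simp only [Finset.prod_insert ha, eval_add, eval_mul, eval_sub, eval_X, eval_C]
      linear_combination -hdiv

def degreeLTAddMulOn (U : Set ℂ) (W : ℂ → ℂ) (n : ℕ) : Submodule ℂ (ℂ → ℂ) where
  carrier := {g | ∃ P ∈ degreeLT ℂ n, ∃ h : ℂ → ℂ, DifferentiableOn ℂ h U ∧
    ∀ z ∈ U, g z = P.eval z + W z * h z}
  add_mem' := by
    rintro g₁ g₂ ⟨P₁, hP₁, h₁, hh₁, e₁⟩ ⟨P₂, hP₂, h₂, hh₂, e₂⟩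
    refine ⟨P₁ + P₂, add_mem hP₁ hP₂, h₁ + h₂, hh₁.add hh₂, fun z hz => ?_⟩
    simp only [Pi.add_apply, e₁ z hz, e₂ z hz, eval_add]
    ring
  zero_mem' := ⟨0, zero_mem _, 0, differentiableOn_const 0, by simp⟩
  smul_mem' := by
    rintro c g ⟨P, hP, h, hh, e⟩
    refine ⟨c • P, Submodule.smul_mem _ c hP, c • h, hh.const_smul c, fun z hz => ?_⟩
    simp only [Pi.smul_apply, smul_eq_mul, e z hz, eval_smul]
    ring

theorem exists_mem_degreeLT_sub_evalMulLinear_mem_degreeLTAddMulOn {ι : Type*} {U : Set ℂ}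
    (hU : IsOpen U) {n : ℕ} (s : Finset ι) (hs : s.card = n + n) (ζ : ι → ℂ)
    (hζ : ∀ k ∈ s, ζ k ∈ U) {g : ℂ → ℂ} (hg : DifferentiableOn ℂ g U) :
    ∃ S ∈ degreeLT ℂ n,
      g - evalMulLinear (· ^ n) S ∈ degreeLTAddMulOn U (fun z => ∏ k ∈ s, (z - ζ k)) n := by
  obtain ⟨R, hR, h, hh, hgR⟩ := Complex.exists_mem_degreeLT_eq_eval_add_prod_mul hU s ζ hζ hg
  rw [hs] at hR
  refine ⟨R /ₘ X ^ n, divByMonic_X_pow_mem_degreeLT hR, R %ₘ X ^ n, ?_, h, hh,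
    fun z hz => ?_⟩
  · rw [mem_degreeLT, ← degree_X_pow (R := ℂ)]
    exact degree_modByMonic_lt R (monic_X_pow n)
  · have hsplit := congrArg (eval z) (modByMonic_add_div R (X ^ n))
    simp only [eval_add, eval_mul, eval_pow, eval_X] at hsplit
    simp only [Pi.sub_apply, evalMulLinear_apply, hgR z hz]
    linear_combination -hsplit

theorem multipoint_pade_exists_general (U : Set ℂ) (hU : IsOpen U) (f : ℂ → ℂ)
    (hf : DifferentiableOn ℂ f U) (n : ℕ)
    (ζ : Fin (2 * n) → ℂ) (hζ : ∀ k, ζ k ∈ U) :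
    ∃ P Q : Polynomial ℂ, ∃ h : ℂ → ℂ,
      P.degree ≤ ((n - 1 : ℕ) : WithBot ℕ) ∧ Q.degree ≤ (n : ℕ) ∧ Q ≠ 0 ∧
      DifferentiableOn ℂ h U ∧
      ∀ z ∈ U, Q.eval z * f z - P.eval z = (∏ k, (z - ζ k)) * h z := by
  set K := degreeLTAddMulOn U (fun z => ∏ k, (z - ζ k)) n
  set T := K.mkQ ∘ₗ evalMulLinear f ∘ₗ (degreeLT ℂ (n + 1)).subtype
  set S := K.mkQ ∘ₗ evalMulLinear (· ^ n) ∘ₗ (degreeLT ℂ n).subtype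
  have hTS : LinearMap.range T ≤ LinearMap.range S := by
    rintro _ ⟨⟨Q, -⟩, rfl⟩
    obtain ⟨R, hR, hmem⟩ := exists_mem_degreeLT_sub_evalMulLinear_mem_degreeLTAddMulOn hU
      (n := n) Finset.univ (by simp [two_mul]) ζ (fun k _ => hζ k)
      (g := evalMulLinear f Q) (Q.differentiable.differentiableOn.mul hf)
    exact ⟨⟨R, hR⟩, ((Submodule.Quotient.eq K).2 hmem).symm⟩
  obtain ⟨⟨Q, hQ⟩, hQT, hQ0⟩ := Submodule.exists_mem_ne_zero_of_ne_bot
    (LinearMap.ker_ne_bot_of_range_le_range S hTS (by simp [(degreeLTEquiv ℂ _).finrank_eq]))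
  obtain ⟨P, hP, h, hh, hQP⟩ := (Submodule.Quotient.mk_eq_zero K).1 hQT
  refine ⟨P, Q, h, ?_, ?_, by simpa using hQ0, hh, fun z hz => ?_⟩
  · rcases n with _ | m
    · exact (mem_degreeLT.1 hP).le
    · simpa [degreeLT_succ_eq_degreeLE, mem_degreeLE] using hP
  · simpa [degreeLT_succ_eq_degreeLE, mem_degreeLE] using hQ
  · have hQz := hQP z hz
    simp only [LinearMap.coe_comp, Submodule.coe_subtype, Function.comp_apply,
      evalMulLinear_apply] at hQz
    linear_combination hQz

/-- Existence of multipoint Padé approximants: given `2n` interpolation nodes in an open set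
`U` on which `f` is analytic, there are polynomials `P` (degree `≤ n-1`) and `Q ≠ 0`
(degree `≤ n`) such that `(Qf - P)/W` is analytic on `U`, i.e. `Qf - P = W·h` with `h`
analytic on `U`. -/
theorem multipoint_pade_exists (U : Set ℂ) (hU : IsOpen U) (f : ℂ → ℂ)
    (hf : DifferentiableOn ℂ f U) (n : ℕ) (hn : 1 ≤ n)
    (ζ : Fin (2 * n) → ℂ) (hζ : ∀ k, ζ k ∈ U) :
    ∃ P Q : Polynomial ℂ, ∃ h : ℂ → ℂ,
      P.degree ≤ ((n - 1 : ℕ) : WithBot ℕ) ∧ Q.degree ≤ (n : ℕ) ∧ Q ≠ 0 ∧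
      DifferentiableOn ℂ h U ∧
      ∀ z ∈ U, Q.eval z * f z - P.eval z = (∏ k, (z - ζ k)) * h z :=
  multipoint_pade_exists_general U hU f hf n ζ hζ
end

section
/- (Orthogonality of multipoint Padé denominators for Markov functions) Let σ be a finite positive Borel measure on ℝ whose support is contained in a compact interval F, and let f(z) := ∫ dσ(t)/(t − z) for z ∈ ℂ \ F. Let n ≥ 1, let ζ_1, …, ζ_{2n} be real numbers not lying in F, and set W(z) := ∏_{k=1}^{2n} (z − ζ_k). Suppose P is a polynomial of degree ≤ n − 1 and Q is a polynomial of degree ≤ n with Q not identically 0, and suppose there is a function h analytic on ℂ \ F with Q(z) f(z) − P(z) = W(z) h(z) for all z ∈ ℂ \ F. Then ∫ Q(t) t^j / W(t) dσ(t) = 0 for every j = 0, 1, …, n − 1. -/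
/-!
Centre a disc `D = B(c, r)` at the midpoint of `F` with `F ⊂ D` and all nodes outside `D̄`.
Multiplying by `zʲ`, the hypothesis reads `zʲ h = g f - p` with `g = zʲQ/W` and `p = zʲP/W`
holomorphic on `D̄`. The left side is holomorphic off `F` and `o(1/z)` at infinity (a degree
count, using `f → 0`), so its integral over `∂D` vanishes; `p` integrates to zero by Cauchy's
theorem; and by Fubini and Cauchy's integral formula `∮_{∂D} g f = -2πi ∫ g dσ`.
-/

open Polynomial Filter MeasureTheory Metric Complex Bornology Topology

/-- Sign convention of Markov functions: `∫ dμ(w) / (w - z)`, the negative of the usual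
Cauchy transform. -/
noncomputable def cauchyTransform (μ : Measure ℂ) (z : ℂ) : ℂ := ∫ w, (w - z)⁻¹ ∂μ

theorem norm_sub_inv_le_of_mem_closedBall {c w z : ℂ} {ρ : ℝ} (hw : w ∈ closedBall c ρ)
    (hz : ρ < dist z c) : ‖(w - z)⁻¹‖ ≤ (dist z c - ρ)⁻¹ := by
  rw [norm_inv]
  refine inv_anti₀ (sub_pos.2 hz) ?_
  have := dist_triangle z w c
  rw [dist_comm z w, dist_eq_norm w z] at this
  linarith [mem_closedBall.1 hw]

theorem cauchyTransform_map_ofReal (σ : Measure ℝ) (z : ℂ) :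
    cauchyTransform (σ.map ((↑) : ℝ → ℂ)) z = ∫ t, ((t : ℂ) - z)⁻¹ ∂σ :=
  isometry_ofReal.isClosedEmbedding.measurableEmbedding.integral_map _

theorem tendsto_cauchyTransform_cobounded {μ : Measure ℂ} [IsFiniteMeasure μ] {c : ℂ} {ρ : ℝ}
    (hμ : μ (closedBall c ρ)ᶜ = 0) : Tendsto (cauchyTransform μ) (cobounded ℂ) (𝓝 0) := by
  have hμ' : ∀ᵐ w ∂μ, w ∈ closedBall c ρ :=
    (measure_eq_zero_iff_ae_notMem.1 hμ).mono fun _ => not_not.1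
  have hdist : Tendsto (fun z => dist z c - ρ) (cobounded ℂ) atTop :=
    tendsto_atTop_add_const_right _ _ (tendsto_dist_right_cobounded_atTop c)
  refine squeeze_zero_norm' ?_
    (by simpa using (tendsto_inv_atTop_zero.comp hdist).const_mul (μ.real Set.univ))
  filter_upwards [hdist.eventually_gt_atTop 0] with z hz
  rw [mul_comm]
  exact norm_integral_le_of_norm_le_const
    (hμ'.mono fun w hw => norm_sub_inv_le_of_mem_closedBall hw (sub_pos.1 hz))

theorem Polynomial.tendsto_eval_mul_sub_eval_div_eval_cobounded {𝕜 : Type*} [NormedField 𝕜]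
    {f : 𝕜 → 𝕜} (hf : Tendsto f (cobounded 𝕜) (𝓝 0)) {A B W : 𝕜[X]}
    (hA : A.degree ≤ W.degree) (hB : B.degree < W.degree) :
    Tendsto (fun z => (A.eval z * f z - B.eval z) / W.eval z) (cobounded 𝕜) (𝓝 0) := by
  have hAf := (isBigO_cobounded_of_degree_le hA).mul_isLittleO
    ((Asymptotics.isLittleO_one_iff 𝕜).2 hf)
  simp only [mul_one] at hAf
  exact (hAf.sub (isLittleO_cobounded_of_degree_lt hB)).tendsto_div_nhds_zero

theorem Polynomial.exists_lt_forall_mem_closedBall_eval_ne_zero {𝕜 : Type*} [NormedField 𝕜]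
    {W : 𝕜[X]} (hW : W ≠ 0) {c : 𝕜} {ρ : ℝ} (hWρ : ∀ z ∈ closedBall c ρ, W.eval z ≠ 0) :
    ∃ r, ρ < r ∧ ∀ z ∈ closedBall c r, W.eval z ≠ 0 := by
  classical
  have hroots : ∀ ζ ∈ W.roots.toFinset, ∀ᶠ r in 𝓝[>] ρ, r < dist ζ c := fun ζ hζ =>
    eventually_nhdsWithin_of_eventually_nhds (eventually_lt_nhds (not_le.1 fun h =>
      hWρ ζ (mem_closedBall.2 h) (by simpa [hW] using hζ)))
  obtain ⟨r, hr, hrζ⟩ :=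
    (eventually_mem_nhdsWithin.and ((eventually_all_finset _).2 hroots)).exists
  exact ⟨r, hr, fun z hz hWz => (hrζ z (by simpa [hW] using hWz)).not_ge (mem_closedBall.1 hz)⟩

theorem Polynomial.degree_prod_X_sub_C {R ι : Type*} [CommRing R] [IsDomain R] [Fintype ι]
    (ζ : ι → R) : (∏ k, (X - C (ζ k))).degree = (Fintype.card ι : WithBot ℕ) := by
  simp [degree_prod]

theorem Polynomial.degree_X_mul_X_pow_mul_le {R : Type*} [Semiring R] {p : R[X]} {m : ℕ}
    (hp : p.degree ≤ m) (j : ℕ) : (X * (X ^ j * p)).degree ≤ ↑(m + (j + 1)) := by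
  rw [← mul_assoc, ← pow_succ', add_comm m, Nat.cast_add]
  exact (degree_mul_le _ _).trans (add_le_add (degree_X_pow_le _) hp)

theorem circleIntegral_eq_zero_of_tendsto_smul_cobounded {E : Type*} [NormedAddCommGroup E]
    [NormedSpace ℂ E] {c : ℂ} {ρ r : ℝ} (hr : 0 < r) (hρr : ρ < r) {H : ℂ → E}
    (hH : DifferentiableOn ℂ H (closedBall c ρ)ᶜ)
    (hdecay : Tendsto (fun z => z • H z) (cobounded ℂ) (𝓝 0)) :
    ∮ z in C(c, r), H z = 0 := by
  have hout : ∀ {z}, r ≤ dist z c → z ∈ (closedBall c ρ)ᶜ := fun hz hz' =>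
    (hρr.trans_le hz).not_ge hz'
  have hconst : ∀ R, r ≤ R → ∮ z in C(c, R), H z = ∮ z in C(c, r), H z := fun R hR =>
    circleIntegral_eq_of_differentiable_on_annulus_off_countable hr hR Set.countable_empty
      (hH.continuousOn.mono fun z hz => hout (not_lt.1 fun h => hz.2 h))
      fun z hz => hH.differentiableAt (isClosed_closedBall.isOpen_compl.mem_nhds
        (hout (not_le.1 fun h => hz.1.2 h).le))
  refine norm_le_zero_iff.1 (le_of_forall_pos_le_add fun ε hε => ?_)
  obtain ⟨M, -, hM⟩ := hasBasis_cobounded_norm.tendsto_left_iff.1 hdecay _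
    (closedBall_mem_nhds 0 (by positivity : 0 < ε / (4 * Real.pi)))
  set R := r + |M| + 2 * ‖c‖
  have hRr : r ≤ R := by linarith [abs_nonneg M, norm_nonneg c]
  have hbound : ∀ z ∈ sphere c R, ‖H z‖ ≤ ε / (4 * Real.pi) / (R / 2) := by
    intro z hz
    have hzc : R - ‖c‖ ≤ ‖z‖ := by
      have := norm_sub_le z c
      rw [← dist_eq_norm, mem_sphere.1 hz] at this
      linarith
    have hzM : M ≤ ‖z‖ := by linarith [le_abs_self M, norm_nonneg c]
    have hz2 : R / 2 ≤ ‖z‖ := by linarith [abs_nonneg M, norm_nonneg c]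
    have := hM hzM
    rw [mem_closedBall_zero_iff, norm_smul] at this
    rw [le_div_iff₀ (by positivity)]
    nlinarith [norm_nonneg (H z)]
  calc ‖∮ z in C(c, r), H z‖ = ‖∮ z in C(c, R), H z‖ := by rw [hconst R hRr]
    _ ≤ 2 * Real.pi * R * (ε / (4 * Real.pi) / (R / 2)) :=
      circleIntegral.norm_integral_le_of_norm_le_const (hr.le.trans hRr) hbound
    _ = 0 + ε := by field_simp [(hr.trans_le hRr).ne']; ring

theorem integrable_circleMap_mul_sub_inv {μ : Measure ℂ} [IsFiniteMeasure μ] {c : ℂ}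
    {ρ r : ℝ} (hr : 0 ≤ r) (hρr : ρ < r) (hμ : ∀ᵐ w ∂μ, w ∈ closedBall c ρ) {g : ℂ → ℂ}
    (hg : ContinuousOn g (sphere c r)) :
    Integrable (fun p : ℝ × ℂ =>
        circleMap 0 r p.1 * I * (g (circleMap c r p.1) * (p.2 - circleMap c r p.1)⁻¹))
      ((volume.restrict (Set.uIoc 0 (2 * Real.pi))).prod μ) := by
  have : IsFiniteMeasure (volume.restrict (Set.uIoc 0 (2 * Real.pi))) := by
    rw [Set.uIoc_of_le Real.two_pi_pos.le]; infer_instance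
  have hγ : ∀ θ, circleMap c r θ ∈ sphere c r := circleMap_mem_sphere c hr
  have hgγ : Continuous fun θ => g (circleMap c r θ) :=
    hg.comp_continuous (continuous_circleMap c r) hγ
  obtain ⟨C, hC⟩ := (isCompact_sphere c r).exists_bound_of_continuousOn hg
  refine Integrable.mono' (integrable_const (r * (C * (r - ρ)⁻¹))) ?_ ?_
  · have hγ' : Measurable fun p : ℝ × ℂ => circleMap c r p.1 :=
      (continuous_circleMap c r).measurable.comp measurable_fst
    exact ((((continuous_circleMap 0 r).measurable.comp measurable_fst).mul_const I).mul
      ((hgγ.measurable.comp measurable_fst).mul (measurable_snd.sub hγ').inv)).aestronglyMeasurable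
  · have hμ' : ∀ᵐ p ∂(volume.restrict (Set.uIoc 0 (2 * Real.pi))).prod μ,
        p.2 ∈ closedBall c ρ :=
      (Measure.ae_prod_iff_ae_ae (measurableSet_closedBall.preimage measurable_snd)).2
        (.of_forall fun _ => hμ)
    filter_upwards [hμ'] with ⟨θ, w⟩ hw
    have hθ := mem_sphere.1 (hγ θ)
    have hkernel := norm_sub_inv_le_of_mem_closedBall hw (z := circleMap c r θ) (hθ.symm ▸ hρr)
    rw [hθ] at hkernel
    simp only [norm_mul, norm_circleMap_zero, norm_I, abs_of_nonneg hr, mul_one]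
    gcongr
    · exact (norm_nonneg _).trans (hC _ (hγ θ))
    · exact hC _ (hγ θ)

theorem circleIntegral_mul_cauchyTransform {μ : Measure ℂ} [IsFiniteMeasure μ] {c : ℂ}
    {ρ r : ℝ} (hr : 0 ≤ r) (hρr : ρ < r) (hμ : μ (closedBall c ρ)ᶜ = 0) {g : ℂ → ℂ}
    (hg : DifferentiableOn ℂ g (closedBall c r)) :
    ∮ z in C(c, r), g z * cauchyTransform μ z = -(2 * Real.pi * I) * ∫ w, g w ∂μ := by
  have hμ' : ∀ᵐ w ∂μ, w ∈ closedBall c ρ :=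
    (measure_eq_zero_iff_ae_notMem.1 hμ).mono fun _ => not_not.1
  set F : ℝ → ℂ → ℂ := fun θ w =>
    circleMap 0 r θ * I * (g (circleMap c r θ) * (w - circleMap c r θ)⁻¹)
  have hinner : ∀ᵐ w ∂μ, ∫ θ in 0..2 * Real.pi, F θ w = -(2 * Real.pi * I) * g w := by
    filter_upwards [hμ'] with w hw
    have hcauchy :=
      hg.circleIntegral_sub_inv_smul (mem_ball.2 ((mem_closedBall.1 hw).trans_lt hρr))
    calc ∫ θ in 0..2 * Real.pi, F θ w = -∮ z in C(c, r), (z - w)⁻¹ • g z := by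
          rw [circleIntegral, ← intervalIntegral.integral_neg]
          refine intervalIntegral.integral_congr fun θ _ => ?_
          simp only [F, deriv_circleMap, smul_eq_mul, ← neg_sub w, inv_neg]
          ring
      _ = -(2 * Real.pi * I) * g w := by rw [hcauchy, smul_eq_mul, neg_mul]
  calc ∮ z in C(c, r), g z * cauchyTransform μ z
      = ∫ θ in 0..2 * Real.pi, ∫ w, F θ w ∂μ := by
        simp only [circleIntegral, cauchyTransform, F, deriv_circleMap, ← integral_const_mul,
          smul_eq_mul]
    _ = ∫ w, (∫ θ in 0..2 * Real.pi, F θ w) ∂μ := intervalIntegral_integral_swap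
        (integrable_circleMap_mul_sub_inv hr hρr hμ'
          (hg.continuousOn.mono sphere_subset_closedBall))
    _ = -(2 * Real.pi * I) * ∫ w, g w ∂μ := by
        rw [integral_congr_ae hinner, integral_const_mul]

theorem integral_eval_div_eq_zero_of_mul_cauchyTransform_sub_eq_mul {μ : Measure ℂ}
    [IsFiniteMeasure μ] {c : ℂ} {ρ : ℝ} (hμ : μ (closedBall c ρ)ᶜ = 0) {A B W : ℂ[X]}
    (hA : (X * A).degree ≤ W.degree) (hB : (X * B).degree < W.degree)
    (hW : ∀ z ∈ closedBall c ρ, W.eval z ≠ 0) {h : ℂ → ℂ}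
    (hh : DifferentiableOn ℂ h (closedBall c ρ)ᶜ)
    (heq : ∀ z ∉ closedBall c ρ, A.eval z * cauchyTransform μ z - B.eval z = W.eval z * h z) :
    ∫ w, A.eval w / W.eval w ∂μ = 0 := by
  rcases lt_or_ge ρ 0 with hρ | hρ
  · rw [closedBall_eq_empty.2 hρ, Set.compl_empty, Measure.measure_univ_eq_zero] at hμ
    simp [hμ]
  have hW0 : W ≠ 0 := ne_zero_of_degree_gt hB
  obtain ⟨r, hρr, hWr⟩ := exists_lt_forall_mem_closedBall_eval_ne_zero hW0 hW
  have hr : 0 < r := hρ.trans_lt hρr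
  have hdiv : ∀ P : ℂ[X], DifferentiableOn ℂ (fun z => P.eval z / W.eval z) (closedBall c r) :=
    fun P z hz => (P.differentiableAt.div W.differentiableAt (hWr z hz)).differentiableWithinAt
  have hsphere : sphere c r ⊆ (closedBall c ρ)ᶜ := fun z hz hz' =>
    hρr.not_ge ((mem_sphere.1 hz).symm ▸ mem_closedBall.1 hz')
  have hsplit : Set.EqOn (fun z => A.eval z / W.eval z * cauchyTransform μ z)
      (fun z => h z + B.eval z / W.eval z) (sphere c r) := fun z hz => by
    have hWz := hWr z (sphere_subset_closedBall hz)
    field_simp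
    linear_combination heq z (hsphere hz)
  have hdecay : Tendsto (fun z => z • h z) (cobounded ℂ) (𝓝 0) := by
    refine (tendsto_eval_mul_sub_eval_div_eval_cobounded
      (tendsto_cauchyTransform_cobounded hμ) hA hB).congr' ?_
    filter_upwards [(eventually_cofinite_not_isRoot hW0).filter_mono
        ((cobounded_eq_cocompact (α := ℂ)).le.trans cocompact_le_cofinite),
      isBounded_def.1 (isBounded_closedBall (x := c) (r := ρ))] with z hWz hz
    rw [eq_comm, smul_eq_mul, eq_div_iff hWz]
    simp only [eval_mul, eval_X]
    linear_combination -z * heq z hz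
  have key : -(2 * Real.pi * I) * ∫ w, A.eval w / W.eval w ∂μ = 0 := by
    rw [← circleIntegral_mul_cauchyTransform hr.le hρr hμ (hdiv A),
      circleIntegral.integral_congr hr.le hsplit,
      circleIntegral.integral_add ((hh.continuousOn.mono hsphere).circleIntegrable hr.le)
        ((hdiv B).continuousOn.mono sphere_subset_closedBall |>.circleIntegrable hr.le),
      circleIntegral_eq_zero_of_tendsto_smul_cobounded hr hρr hh hdecay,
      circleIntegral_eq_zero_of_differentiable_on_off_countable hr.le Set.countable_empty
        (hdiv B).continuousOn fun z hz =>
          (hdiv B).differentiableAt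
            (mem_of_superset (isOpen_ball.mem_nhds hz.1) ball_subset_closedBall), zero_add]
  simpa [Real.pi_ne_zero, I_ne_zero] using key

theorem multipoint_pade_orthogonality_general (σ : Measure ℝ) [IsFiniteMeasure σ] (a b : ℝ)
    (hsupp : σ (Set.Icc a b)ᶜ = 0)
    (n : ℕ) (ζ : Fin (2 * n) → ℝ) (hζ : ∀ k, ζ k ∉ Set.Icc a b)
    (P Q : Polynomial ℂ) (hP : P.degree ≤ ((n - 1 : ℕ) : WithBot ℕ))
    (hQ : Q.degree ≤ (n : ℕ)) (h : ℂ → ℂ)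
    (hh : DifferentiableOn ℂ h ((fun x : ℝ => (x : ℂ)) '' Set.Icc a b)ᶜ)
    (heq : ∀ z ∈ ((fun x : ℝ => (x : ℂ)) '' Set.Icc a b)ᶜ,
      Q.eval z * (∫ t, ((t : ℂ) - z)⁻¹ ∂σ) - P.eval z = (∏ k, (z - (ζ k : ℂ))) * h z) :
    ∀ j < n, ∫ t, Q.eval (t : ℂ) * (t : ℂ) ^ j / (∏ k, ((t : ℂ) - (ζ k : ℂ))) ∂σ = 0 := by
  intro j hj
  rw [Real.Icc_eq_closedBall] at hsupp hζ hh heq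
  set c := (a + b) / 2
  set ρ := (b - a) / 2
  have hout : (closedBall (c : ℂ) ρ)ᶜ ⊆ ((↑) '' closedBall c ρ)ᶜ :=
    Set.compl_subset_compl.2 (Set.image_subset_iff.2 (isometry_ofReal.preimage_closedBall c ρ).ge)
  have hWdeg : (∏ k, (X - C (ζ k : ℂ))).degree = ↑(2 * n) := by
    rw [degree_prod_X_sub_C, Fintype.card_fin]
  have key := integral_eval_div_eq_zero_of_mul_cauchyTransform_sub_eq_mul
    (μ := σ.map ((↑) : ℝ → ℂ)) (c := c) (ρ := ρ) (A := X ^ j * Q) (B := X ^ j * P)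
    (W := ∏ k, (X - C (ζ k : ℂ))) (h := fun z => z ^ j * h z) ?_
    (hWdeg ▸ (degree_X_mul_X_pow_mul_le hQ j).trans (by norm_cast; omega))
    (hWdeg ▸ (degree_X_mul_X_pow_mul_le hP j).trans_lt (by norm_cast; omega)) ?_
    ((differentiable_pow j).differentiableOn.mul (hh.mono hout)) ?_
  · rw [isometry_ofReal.isClosedEmbedding.measurableEmbedding.integral_map] at key
    simpa [eval_prod, mul_comm] using key
  · rw [Measure.map_apply measurable_ofReal measurableSet_closedBall.compl, Set.preimage_compl,
      isometry_ofReal.preimage_closedBall, hsupp]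
  · intro z hz
    simp only [eval_prod, eval_sub, eval_X, eval_C]
    refine Finset.prod_ne_zero_iff.2 fun k _ => sub_ne_zero.2 fun hk => hζ k ?_
    rwa [hk, ← Set.mem_preimage, isometry_ofReal.preimage_closedBall] at hz
  · intro z hz
    simp only [eval_mul, eval_pow, eval_X, eval_prod, eval_sub, eval_C, cauchyTransform_map_ofReal]
    linear_combination z ^ j * heq z (hout hz)

/-- Orthogonality of multipoint Padé denominators for Markov functions:
if `(Qf - P)/W` extends analytically to `ℂ \ F` (with `F = [a,b]` a compact interval
containing the support of `σ`, `f` the Markov function of `σ`, real nodes off `F`),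
then `∫ Q(t) tʲ / W(t) dσ(t) = 0` for `j = 0, …, n-1`. -/
theorem multipoint_pade_orthogonality (σ : Measure ℝ) [IsFiniteMeasure σ] (a b : ℝ)
    (hab : a ≤ b) (hsupp : σ (Set.Icc a b)ᶜ = 0)
    (n : ℕ) (hn : 1 ≤ n) (ζ : Fin (2 * n) → ℝ) (hζ : ∀ k, ζ k ∉ Set.Icc a b)
    (P Q : Polynomial ℂ) (hP : P.degree ≤ ((n - 1 : ℕ) : WithBot ℕ))
    (hQ : Q.degree ≤ (n : ℕ)) (hQ0 : Q ≠ 0) (h : ℂ → ℂ)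
    (hh : DifferentiableOn ℂ h ((fun x : ℝ => (x : ℂ)) '' Set.Icc a b)ᶜ)
    (heq : ∀ z ∈ ((fun x : ℝ => (x : ℂ)) '' Set.Icc a b)ᶜ,
      Q.eval z * (∫ t, ((t : ℂ) - z)⁻¹ ∂σ) - P.eval z = (∏ k, (z - (ζ k : ℂ))) * h z) :
    ∀ j < n, ∫ t, Q.eval (t : ℂ) * (t : ℂ) ^ j / (∏ k, ((t : ℂ) - (ζ k : ℂ))) ∂σ = 0 :=
  multipoint_pade_orthogonality_general σ a b hsupp n ζ hζ P Q hP hQ h hh heq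
end
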